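/- Let P be the free commutative monoid on a set S of points each with a degree deg : S → ℕ≥1, and suppose for each n ≥ 1 there are finitely many points of degree n. Then in ℚ[[t]], the product Π_{x ∈ S} (1 − t^{deg x})^{−1} equals Σ_{α} t^{deg α}, the sum over all effective cycles α ∈ P, where deg(Σ a_x x) = Σ a_x deg(x). -/

import Mathlib

open PowerSeries

/-- The product topology (coefficientwise convergence, i.e. `t`-adic stabilization of
partial sums/products) on `ℚ[[t]]`. -/
noncomputable instance : TopologicalSpace ℚ⟦X⟧ := Pi.topologicalSpace

/-!
Modulo `X ^ (n + 1)`, each factor `(1 - X ^ d)⁻¹` agrees with the truncated geometric series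
`∑_{k ≤ n} X ^ (k * d)`, so a partial product over a finite set `G` of points agrees with the sum
of `X ^ deg α` over the cycles `α` supported on `G` with all multiplicities `≤ n`. As soon as `G`
contains every point of degree `≤ n`, these cycles include all cycles of degree `n`, so the `n`-th
coefficient of the partial products stabilises at the number of effective cycles of degree `n`,
which is also the `n`-th coefficient of the sum.
-/

open Finset Finsupp

theorem Finset.prod_sum_eq_sum_finsupp {ι α R : Type*} [Zero α] [CommSemiring R]
    (s : Finset ι) (t : ι → Finset α) (f : ι → α → R) :
    ∏ i ∈ s, ∑ a ∈ t i, f i a = ∑ g ∈ s.finsupp t, ∏ i ∈ s, f i (g i) := by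
  classical
  rw [prod_sum, Finset.finsupp, sum_map]
  refine sum_congr (by congr!) fun p _ => ?_
  rw [← prod_attach s]
  exact prod_congr rfl fun i _ => by simp [indicator_of_mem i.2]

namespace PowerSeries

theorem coeff_eq_of_sModEq {R : Type*} [CommRing R] {φ ψ : R⟦X⟧} {N n : ℕ}
    (h : φ ≡ ψ [SMOD Ideal.span {(X : R⟦X⟧) ^ N}]) (hn : n < N) : coeff n φ = coeff n ψ := by
  rw [SModEq.sub_mem, Ideal.mem_span_singleton, X_pow_dvd_iff] at h
  simpa [sub_eq_zero] using h n hn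

variable {K : Type*} [Field K]

theorem inv_one_sub_X_pow_sModEq_geom_sum {d : ℕ} (hd : d ≠ 0) (N : ℕ) :
    (1 - X ^ d : K⟦X⟧)⁻¹ ≡ ∑ k ∈ range N, X ^ (k * d) [SMOD Ideal.span {(X : K⟦X⟧) ^ N}] := by
  have hinv : (1 - X ^ d : K⟦X⟧)⁻¹ * (1 - X ^ d) = 1 :=
    PowerSeries.inv_mul_cancel _ (by simp [hd])
  have hdiff : (1 - X ^ d : K⟦X⟧)⁻¹ - ∑ k ∈ range N, X ^ (k * d) = (1 - X ^ d)⁻¹ * X ^ (N * d) := by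
    simp_rw [pow_mul']
    calc _ = (1 - X ^ d)⁻¹ * (1 - (1 - X ^ d) * ∑ k ∈ range N, ((X : K⟦X⟧) ^ d) ^ k) := by
          rw [mul_sub, mul_one, ← mul_assoc, hinv, one_mul]
      _ = _ := by rw [mul_neg_geom_sum, sub_sub_cancel]
  rw [SModEq.sub_mem, Ideal.mem_span_singleton, hdiff]
  exact (pow_dvd_pow X (Nat.le_mul_of_pos_right N (Nat.pos_of_ne_zero hd))).mul_left _

theorem prod_inv_one_sub_X_pow_sModEq {S : Type*} (deg : S → ℕ) {G : Finset S}
    (hG : ∀ x ∈ G, deg x ≠ 0) (N : ℕ) :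
    ∏ x ∈ G, (1 - X ^ deg x : K⟦X⟧)⁻¹ ≡
      ∑ α ∈ G.finsupp fun _ => range N, X ^ weight deg α [SMOD Ideal.span {(X : K⟦X⟧) ^ N}] := by
  have hexpand : ∏ x ∈ G, ∑ k ∈ range N, (X : K⟦X⟧) ^ (k * deg x) =
      ∑ α ∈ G.finsupp fun _ => range N, X ^ weight deg α := by
    rw [prod_sum_eq_sum_finsupp]
    refine sum_congr rfl fun α hα => ?_
    rw [prod_pow_eq_pow_sum, weight_apply,
      Finsupp.sum_of_support_subset α (mem_finsupp_iff.mp hα).1]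
    · rfl
    · simp
  rw [← hexpand]
  exact SModEq.prod fun x hx => inv_one_sub_X_pow_sModEq_geom_sum (hG x hx) N

end PowerSeries

theorem Finsupp.mem_finsupp_range_of_weight_eq {S : Type*} {deg : S → ℕ} (hdeg : ∀ x, deg x ≠ 0)
    {G : Finset S} {n : ℕ} (hG : ∀ x, deg x ≤ n → x ∈ G) {α : S →₀ ℕ} (hα : weight deg α = n) :
    α ∈ G.finsupp fun _ => range (n + 1) := by
  rw [mem_finsupp_iff]
  refine ⟨fun x hx => hG x (hα ▸ le_weight_of_ne_zero' deg (mem_support_iff.mp hx)), fun x _ => ?_⟩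
  exact mem_range_succ_iff.mpr (hα ▸ le_weight deg (hdeg x) α)

theorem PowerSeries.hasSum_coeff_X_pow_weight {R S : Type*} [Semiring R] [TopologicalSpace R]
    {deg : S → ℕ} (hdeg : ∀ x, deg x ≠ 0) {G : Finset S} {n : ℕ} (hG : ∀ x, deg x ≤ n → x ∈ G) :
    HasSum (fun α : S →₀ ℕ => coeff n ((X : R⟦X⟧) ^ weight deg α))
      (∑ α ∈ G.finsupp fun _ => range (n + 1), coeff n (X ^ weight deg α)) := by
  refine hasSum_sum_of_ne_finset_zero fun α hα => ?_
  rw [coeff_X_pow, if_neg]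
  exact fun h => hα (mem_finsupp_range_of_weight_eq hdeg hG h.symm)

/-- Euler product for the zeta function of effective `0`-cycles: for a set `S` of
points with degrees `deg x ≥ 1`, finitely many of each degree, the product
`Π_{x ∈ S} (1 − t^{deg x})⁻¹` equals `Σ_α t^{deg α}`, summed over all effective cycles
`α ∈ ℕ^{(S)}`, where `deg (Σ a_x x) = Σ a_x deg x`. -/
theorem stmt14 (S : Type) (deg : S → ℕ) (hdeg : ∀ x, 1 ≤ deg x)
    (hfin : ∀ n : ℕ, {x : S | deg x = n}.Finite) :
    ∏' x : S, (1 - (X : ℚ⟦X⟧) ^ deg x)⁻¹ =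
      ∑' α : S →₀ ℕ, (X : ℚ⟦X⟧) ^ (α.sum fun x a => a * deg x) := by
  have hdeg' : ∀ x, deg x ≠ 0 := fun x => Nat.one_le_iff_ne_zero.mp (hdeg x)
  have hcover (n : ℕ) : ∃ G : Finset S, ∀ x, deg x ≤ n → x ∈ G :=
    ⟨((Set.finite_Iic n).preimage' fun i _ => hfin i).toFinset, fun x hx => by simpa using hx⟩
  -- `weight deg α` is definitionally the degree `α.sum fun x a => a * deg x` of the statement.
  have hsummable : Summable fun α : S →₀ ℕ => (X : ℚ⟦X⟧) ^ weight deg α := by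
    refine (WithPiTopology.summable_iff_summable_coeff _).mpr fun n => ?_
    obtain ⟨G, hG⟩ := hcover n
    exact (hasSum_coeff_X_pow_weight hdeg' hG).summable
  have : T2Space ℚ⟦X⟧ := WithPiTopology.instT2Space ℚ
  refine HasProd.tprod_eq ?_
  refine (WithPiTopology.tendsto_iff_coeff_tendsto ℚ _ _ _).mpr fun n => ?_
  rw [SummationFilter.unconditional_filter]
  obtain ⟨G, hG⟩ := hcover n
  refine tendsto_atTop_of_eventually_const fun H (hH : G ≤ H) => ?_
  rw [coeff_eq_of_sModEq (prod_inv_one_sub_X_pow_sModEq deg (fun x _ => hdeg' x) (n + 1))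
    n.lt_succ_self, map_sum]
  exact (hasSum_coeff_X_pow_weight hdeg' fun x hx => hH (hG x hx)).unique
    (((WithPiTopology.hasSum_iff_hasSum_coeff ℚ).mp hsummable.hasSum) n)
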